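/- Let g be the Heisenberg Lie algebra with basis X,Y,Z, [X,Y]=Z, equipped with the Lorentzian inner product whose matrix in (X,Y,Z) is diag(1,1,-λ) with λ>0. Define the Levi-Civita product L on g by Koszul's formula 2⟨L_u v,w⟩=⟨[u,v],w⟩+⟨[w,u],v⟩+⟨[w,v],u⟩, the curvature K(u,v)=L_{[u,v]}-[L_u,L_v], and ric(u,v)=tr(w ↦ K(u,w)v). Then the matrix of ric in the basis (X,Y,Z) is (1/2)·diag(λ, λ, λ²), and the scalar curvature tr(Ric) equals λ/2. -/

import Mathlib

noncomputable section

/-- The Heisenberg bracket: `[X,Y] = Z` in the standard basis `(X,Y,Z)`. -/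
def br (u v : Fin 3 → ℝ) : Fin 3 → ℝ :=
  ![0, 0, u 0 * v 1 - u 1 * v 0]

/-- The Lorentzian metric with matrix `diag(1,1,-λ)` in the basis `(X,Y,Z)`. -/
def G (l : ℝ) : Matrix (Fin 3) (Fin 3) ℝ := Matrix.diagonal ![1, 1, -l]

/-- The corresponding inner product. -/
def ip (l : ℝ) (u v : Fin 3 → ℝ) : ℝ := dotProduct u ((G l).mulVec v)

lemma ip_eq (l : ℝ) (u v : Fin 3 → ℝ) :
    ip l u v = u 0 * v 0 + u 1 * v 1 - l * (u 2 * v 2) := by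
  simp [ip, G, dotProduct, Matrix.mulVec, Matrix.diagonal, Fin.sum_univ_three]
  ring

/-- The explicit Levi-Civita product. -/
def Lf (l : ℝ) (u v : Fin 3 → ℝ) : Fin 3 → ℝ :=
  ![-(l/2) * (u 1 * v 2 + u 2 * v 1), (l/2) * (u 0 * v 2 + u 2 * v 0),
    (u 0 * v 1 - u 1 * v 0) / 2]

/-- Let `λ > 0`, let `L` be the Levi-Civita product given by Koszul's formula,
`K(u,v) = L_{[u,v]} - [L_u, L_v]` the curvature and
`ric(u,v) = tr(w ↦ K(u,w)v)` the Ricci tensor.  Then the matrix of `ric` in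
the basis `(X,Y,Z)` is `(1/2)·diag(λ, λ, λ²)` and the scalar curvature
`tr(Ric)` equals `λ/2`, where `⟨Ric u, v⟩ = ric(u,v)`. -/
theorem ricci_nil_diag (l : ℝ) (hl : 0 < l)
    (L : (Fin 3 → ℝ) → (Fin 3 → ℝ) → (Fin 3 → ℝ))
    (hL : ∀ u v w, 2 * ip l (L u v) w =
      ip l (br u v) w + ip l (br w u) v + ip l (br w v) u)
    (K : (Fin 3 → ℝ) → (Fin 3 → ℝ) → (Fin 3 → ℝ) → (Fin 3 → ℝ))
    (hK : ∀ u v w, K u v w = L (br u v) w - L u (L v w) + L v (L u w))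
    (ric : (Fin 3 → ℝ) → (Fin 3 → ℝ) → ℝ)
    (hric : ∀ u v, ric u v = ∑ i : Fin 3, K u (Pi.single i 1) v i) :
    (∀ i j : Fin 3, ric (Pi.single i 1) (Pi.single j 1) =
      ((1 / 2 : ℝ) • Matrix.diagonal ![l, l, l ^ 2]) i j) ∧
    (∀ R : Matrix (Fin 3) (Fin 3) ℝ,
      (∀ u v, ip l (R.mulVec u) v = ric u v) → R.trace = l / 2) := by
  have hne : l ≠ 0 := ne_of_gt hl
  have hLexp : ∀ u v, L u v = Lf l u v := by
    intro u v
    funext i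
    fin_cases i
    · have h := hL u v (Pi.single 0 1)
      simp [ip_eq, br, Pi.single_apply, Lf] at h ⊢
      linarith
    · have h := hL u v (Pi.single 1 1)
      simp [ip_eq, br, Pi.single_apply, Lf] at h ⊢
      linarith
    · have h := hL u v (Pi.single 2 1)
      simp [ip_eq, br, Pi.single_apply, Lf] at h ⊢
      have h2 := mul_left_cancel₀ hne
        (show l * (2 * L u v 2) = l * (u 0 * v 1 - u 1 * v 0) by linarith)
      linarith
  have key : ∀ i j : Fin 3, ric (Pi.single i 1) (Pi.single j 1) =
      ((1 / 2 : ℝ) • Matrix.diagonal ![l, l, l ^ 2]) i j := by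
    intro i j
    fin_cases i <;> fin_cases j <;>
      simp [hric, hK, hLexp, Lf, br, Fin.sum_univ_three, Pi.single_apply,
        Matrix.diagonal, Matrix.smul_apply] <;> ring
  refine ⟨key, ?_⟩
  intro R hR
  have e00 : R 0 0 = 2⁻¹ * l := by
    have h := hR (Pi.single 0 1) (Pi.single 0 1)
    rw [key 0 0] at h
    simpa [ip_eq, Matrix.mulVec, dotProduct, Fin.sum_univ_three,
      Pi.single_apply, Matrix.diagonal] using h
  have e11 : R 1 1 = 2⁻¹ * l := by
    have h := hR (Pi.single 1 1) (Pi.single 1 1)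
    rw [key 1 1] at h
    simpa [ip_eq, Matrix.mulVec, dotProduct, Fin.sum_univ_three,
      Pi.single_apply, Matrix.diagonal] using h
  have e22 : R 2 2 = -(l / 2) := by
    have h := hR (Pi.single 2 1) (Pi.single 2 1)
    rw [key 2 2] at h
    simp [ip_eq, Matrix.mulVec, dotProduct, Fin.sum_univ_three,
      Pi.single_apply, Matrix.diagonal] at h
    have h2 := mul_left_cancel₀ hne
      (show l * R 2 2 = l * (-(l/2)) by nlinarith)
    linarith
  simp [Matrix.trace, Matrix.diag, Fin.sum_univ_three, e00, e11, e22]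
  ring
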